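/- Let (L, R, d) be a Reynolds LieDer pair over a field k and (V; ρ, R_V, d_V) a representation of it. Define Δ(f, g) := (Δ f, Δ g) on C^n_R(L;V) := Hom(ΛⁿL, V) ⊕ Hom(Λ^{n−1}L, V), where (Δ f)(x_1,…,x_n) = Σ_{i=1}^n f(x_1,…,d x_i,…,x_n) − d_V(f(x_1,…,x_n)). Then Δ is a cochain map for D_R(f, g) = (δ_CE f, −δ_R g − φ f), i.e. D_R(Δ(f, g)) = Δ(D_R(f, g)) for all (f, g) ∈ C^n_R(L;V). -/

import Mathlib

namespace ReynoldsLieDer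

variable {k L V : Type*} [Field k] [LieRing L] [LieAlgebra k L]
  [AddCommGroup V] [Module k V]

/-- Chevalley–Eilenberg-type coboundary operator determined by an action-like map `rh`
and a bracket-like map `br`, acting on plain `m`-cochains `(Fin m → L) → V`:
`(δ f)(x₁,…,x_{m+1}) = Σᵢ (-1)^{i+m} rh(xᵢ) f(x₁,…,x̂ᵢ,…,x_{m+1})
  + Σ_{i<j} (-1)^{i+j+m+1} f(br(xᵢ,xⱼ), x₁,…,x̂ᵢ,…,x̂ⱼ,…,x_{m+1})`
(1-indexed, as in the paper; here the indices are 0-based). -/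
def cobound (rh : L → V → V) (br : L → L → L) :
    (m : ℕ) → ((Fin m → L) → V) → (Fin (m + 1) → L) → V
  | 0, f, x => - rh (x 0) (f fun j => j.elim0)
  | n + 1, f, x =>
      (∑ i : Fin (n + 2), ((-1 : ℤ) ^ ((i : ℕ) + n)) • rh (x i) (f fun l => x (i.succAbove l)))
        + ∑ i : Fin (n + 2), ∑ j : Fin (n + 1),
            if (i : ℕ) ≤ (j : ℕ) then
              ((-1 : ℤ) ^ ((i : ℕ) + (j : ℕ) + n + 1)) •
                f (Fin.cons (br (x i) (x (i.succAbove j)))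
                    fun l : Fin n => x (i.succAbove (j.succAbove l)))
            else 0

/-- The map `φ` from Chevalley–Eilenberg cochains to cochains of the Reynolds operator:
`(φ f)(x₁,…,x_m) = f(R x₁,…,R x_m) - R_V (Σᵢ f(R x₁,…,xᵢ,…,R x_m))
  + (m-1) R_V f(R x₁,…,R x_m)` for `m ≥ 1`, and `φ = id` for `m = 0`. -/
def phimap (Rm : L → L) (RV : V → V) :
    (m : ℕ) → ((Fin m → L) → V) → (Fin m → L) → V
  | 0, f => f
  | n + 1, f => fun x =>
      f (fun i => Rm (x i))
        - RV (∑ i : Fin (n + 1), f fun j => if j = i then x j else Rm (x j))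
        + n • RV (f fun i => Rm (x i))

/-- The operator `Δ` induced by a pair of derivations:
`(Δ f)(x₁,…,x_m) = Σᵢ f(x₁,…,d xᵢ,…,x_m) - d_V (f(x₁,…,x_m))`. -/
def deltamap (dm : L → L) (dV : V → V) {m : ℕ} (f : (Fin m → L) → V) :
    (Fin m → L) → V :=
  fun x => (∑ i : Fin m, f (Function.update x i (dm (x i)))) - dV (f x)

/-- The bracket `[x, y]_R := [x, R y] + [R x, y] - [R x, R y]` induced by a Reynolds
operator. -/
def brR (R : L →ₗ[k] L) (x y : L) : L := ⁅x, R y⁆ + ⁅R x, y⁆ - ⁅R x, R y⁆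

/-- The induced action `ρ_R(x)u := ρ(R x)u + R_V(ρ(R x)u - ρ(x)u)`. -/
def rhoR (R : L →ₗ[k] L) (ρ : L →ₗ[k] Module.End k V) (RV : V →ₗ[k] V)
    (x : L) (v : V) : V :=
  ρ (R x) v + RV (ρ (R x) v - ρ x v)


open Function

set_option linter.unusedSectionVars false
set_option maxHeartbeats 1000000

lemma sum_update_rh {n : ℕ} (rh : L → V →+ V) (dm : L → L)
    (f : (Fin (n+1) → L) → V) (x : Fin (n+2) → L) (i : Fin (n+2)) :
    (∑ p : Fin (n+2), rh (update x p (dm (x p)) i)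
        (f fun l => update x p (dm (x p)) (i.succAbove l)))
      = rh (dm (x i)) (f fun l => x (i.succAbove l))
        + rh (x i) (∑ q : Fin (n+1),
            f (update (fun l => x (i.succAbove l)) q
                (dm ((fun l => x (i.succAbove l)) q)))) := by
  rw [Fin.sum_univ_succAbove _ i]
  congr 1
  · rw [update_self]
    refine congrArg _ (congrArg f (funext fun l => ?_))
    exact update_of_ne (Fin.succAbove_ne i l) _ x
  · rw [map_sum]
    refine Finset.sum_congr rfl fun q _ => ?_
    rw [update_of_ne (Ne.symm (Fin.succAbove_ne i q))]
    refine congrArg _ (congrArg f (funext fun l => ?_))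
    rcases eq_or_ne l q with rfl | hlq
    · rw [update_self, update_self]
    · rw [update_of_ne (Fin.succAbove_right_injective.ne hlq),
        update_of_ne hlq]

lemma sum_update_br {n : ℕ} (br : L → L → L) (dm : L → L)
    (hbr : ∀ a b, dm (br a b) = br (dm a) b + br a (dm b))
    (f : (Fin (n+1) → L) → V)
    (hf : ∀ (y : Fin (n+1) → L) (q : Fin (n+1)) (a b : L),
      f (update y q (a + b)) = f (update y q a) + f (update y q b))
    (x : Fin (n+2) → L) (i : Fin (n+2)) (j : Fin (n+1)) :
    (∑ p : Fin (n+2),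
        f (Fin.cons (br (update x p (dm (x p)) i)
              (update x p (dm (x p)) (i.succAbove j)))
            fun l : Fin n => update x p (dm (x p)) (i.succAbove (j.succAbove l))))
      = ∑ q : Fin (n+1),
          f (update
              ((Fin.cons (br (x i) (x (i.succAbove j)))
                fun l : Fin n => x (i.succAbove (j.succAbove l))) : Fin (n+1) → L)
              q
              (dm ((Fin.cons (α := fun _ => L) (br (x i) (x (i.succAbove j)))
                fun l : Fin n => x (i.succAbove (j.succAbove l))) q))) := by
  set c : L := br (x i) (x (i.succAbove j)) with hc
  set y : Fin n → L := fun l => x (i.succAbove (j.succAbove l)) with hy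
  have hij : i.succAbove j ≠ i := Fin.succAbove_ne i j
  have hinj : Function.Injective fun l : Fin n => i.succAbove (j.succAbove l) :=
    Fin.succAbove_right_injective.comp Fin.succAbove_right_injective
  have hconsadd : ∀ a b : L, f (Fin.cons (a + b) y) = f (Fin.cons a y) + f (Fin.cons b y) := by
    intro a b
    rw [← Fin.update_cons_zero (α := fun _ => L) a y (a + b), hf,
      Fin.update_cons_zero (α := fun _ => L), Fin.update_cons_zero (α := fun _ => L)]
  -- RHS: split off q = 0
  conv_rhs => rw [Fin.sum_univ_succ, Fin.cons_zero (α := fun _ => L), Fin.update_cons_zero (α := fun _ => L)]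
  rw [show (Fin.cons (dm c) y : Fin (n+1) → L)
      = Fin.cons (br (dm (x i)) (x (i.succAbove j)) + br (x i) (dm (x (i.succAbove j)))) y from by
    rw [hc, hbr]]
  rw [hconsadd]
  -- LHS: split off p = i and p = i.succAbove j
  rw [Fin.sum_univ_succAbove _ i, Fin.sum_univ_succAbove _ j]
  rw [← add_assoc]
  congr 1
  · congr 1
    · -- p = i
      rw [update_self, update_of_ne hij]
      refine congrArg f (congrArg _ (funext fun l => ?_))
      exact update_of_ne (Fin.succAbove_ne i (j.succAbove l)) _ x
    · -- p = i.succAbove j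
      rw [update_of_ne hij.symm, update_self]
      refine congrArg f (congrArg _ (funext fun l => ?_))
      exact update_of_ne
        ((Fin.succAbove_right_injective.ne (Fin.succAbove_ne j l))) _ x
  · -- remaining: p = i.succAbove (j.succAbove r) vs q = r.succ
    refine Finset.sum_congr rfl fun r _ => ?_
    rw [Fin.cons_succ]
    rw [show (update (Fin.cons c y : Fin (n+1) → L) r.succ (dm (y r)))
        = Fin.cons c (update y r (dm (y r))) from (Fin.cons_update (α := fun _ => L) c y r _).symm]
    have h1 : update x (i.succAbove (j.succAbove r)) (dm (x (i.succAbove (j.succAbove r)))) i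
        = x i := update_of_ne (Ne.symm (Fin.succAbove_ne i (j.succAbove r))) _ x
    have h2 : update x (i.succAbove (j.succAbove r)) (dm (x (i.succAbove (j.succAbove r))))
        (i.succAbove j) = x (i.succAbove j) :=
      update_of_ne (Fin.succAbove_right_injective.ne (Fin.succAbove_ne j r).symm) _ x
    rw [h1, h2, ← hc]
    refine congrArg f (congrArg _ (funext fun l => ?_))
    rcases eq_or_ne l r with rfl | hlr
    · rw [update_self, update_self]
    · rw [update_of_ne (hinj.ne hlr), update_of_ne hlr]


lemma ite_sub_zero {c : Prop} [Decidable c] (a b : V) :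
    (if c then a - b else 0) = (if c then a else 0) - (if c then b else 0) := by
  split_ifs <;> simp

lemma map_ite_zero (g : V →+ V) (c : Prop) [Decidable c] (a : V) :
    g (if c then a else 0) = if c then g a else 0 := by
  split_ifs <;> simp

lemma sum_ite_zsmul {N : ℕ} (c : Prop) [Decidable c] (ε : ℤ) (t : Fin N → V) :
    (∑ p : Fin N, if c then ε • t p else 0) = if c then ε • ∑ p, t p else 0 := by
  split_ifs <;> simp [Finset.smul_sum]

lemma Rsum1 {n : ℕ} (rh : L → V →+ V) (dm : L → L)
    (f : (Fin (n+1) → L) → V) (x : Fin (n+2) → L) :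
    (∑ p : Fin (n+2), ∑ i : Fin (n+2), (-1 : ℤ) ^ ((i : ℕ) + n) •
        rh (update x p (dm (x p)) i) (f fun l => update x p (dm (x p)) (i.succAbove l)))
      = (∑ i : Fin (n+2), (-1 : ℤ) ^ ((i : ℕ) + n) •
            rh (dm (x i)) (f fun l => x (i.succAbove l)))
        + ∑ i : Fin (n+2), (-1 : ℤ) ^ ((i : ℕ) + n) •
            rh (x i) (∑ q : Fin (n+1),
              f (update (fun l => x (i.succAbove l)) q (dm (x (i.succAbove q))))) := by
  rw [Finset.sum_comm, ← Finset.sum_add_distrib]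
  refine Finset.sum_congr rfl fun i _ => ?_
  rw [← Finset.smul_sum, sum_update_rh rh dm f x i, smul_add]

lemma Rsum2 {n : ℕ} (br : L → L → L) (dm : L → L)
    (hbr : ∀ a b, dm (br a b) = br (dm a) b + br a (dm b))
    (f : (Fin (n+1) → L) → V)
    (hf : ∀ (y : Fin (n+1) → L) (q : Fin (n+1)) (a b : L),
      f (update y q (a + b)) = f (update y q a) + f (update y q b))
    (x : Fin (n+2) → L) :
    (∑ p : Fin (n+2), ∑ i : Fin (n+2), ∑ j : Fin (n+1),
        if (i : ℕ) ≤ (j : ℕ) then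
          (-1 : ℤ) ^ ((i : ℕ) + (j : ℕ) + n + 1) •
            f (Fin.cons (br (update x p (dm (x p)) i)
                (update x p (dm (x p)) (i.succAbove j)))
              fun l : Fin n => update x p (dm (x p)) (i.succAbove (j.succAbove l)))
        else 0)
      = ∑ i : Fin (n+2), ∑ j : Fin (n+1),
          if (i : ℕ) ≤ (j : ℕ) then
            (-1 : ℤ) ^ ((i : ℕ) + (j : ℕ) + n + 1) •
              ∑ q : Fin (n+1),
                f (update
                    ((Fin.cons (br (x i) (x (i.succAbove j)))
                      fun l : Fin n => x (i.succAbove (j.succAbove l))) : Fin (n+1) → L)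
                    q
                    (dm ((Fin.cons (α := fun _ => L) (br (x i) (x (i.succAbove j)))
                      fun l : Fin n => x (i.succAbove (j.succAbove l))) q)))
          else 0 := by
  rw [Finset.sum_comm]
  refine Finset.sum_congr rfl fun i _ => ?_
  rw [Finset.sum_comm]
  refine Finset.sum_congr rfl fun j _ => ?_
  rw [sum_ite_zsmul, sum_update_br br dm hbr f hf x i j]

lemma cobound_deltamap (rh : L → V →+ V) (br : L → L → L) (dm : L → L) (dV : V →+ V)
    (hco : ∀ a v, dV (rh a v) = rh (dm a) v + rh a (dV v))
    (hbr : ∀ a b, dm (br a b) = br (dm a) b + br a (dm b)) :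
    ∀ (m : ℕ) (f : (Fin m → L) → V),
      (∀ (y : Fin m → L) (q : Fin m) (a b : L),
        f (update y q (a + b)) = f (update y q a) + f (update y q b)) →
      cobound (fun a v => rh a v) br m (deltamap dm (fun v => dV v) f)
        = deltamap dm (fun v => dV v) (cobound (fun a v => rh a v) br m f)
  | 0, f, hf => by
    funext x
    simp only [cobound, deltamap, Finset.univ_eq_empty, Finset.sum_empty, Fin.sum_univ_succ,
      update_self, zero_sub, map_neg, neg_neg, hco]
    abel
  | n + 1, f, hf => by
    funext x
    simp only [cobound, deltamap]
    conv_rhs => rw [Finset.sum_add_distrib]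
    rw [Rsum1 rh dm f x, Rsum2 br dm hbr f hf x]
    simp only [map_sub, smul_sub, ite_sub_zero, Finset.sum_sub_distrib, map_add, map_sum,
      map_ite_zero, map_zsmul, hco, smul_add, Finset.smul_sum, Finset.sum_add_distrib]
    abel

lemma phimap_deltamap (Rm : L → L) (RV : V →+ V) (dm : L → L) (dV : V →+ V)
    (hRd : ∀ a, Rm (dm a) = dm (Rm a)) (hC : ∀ v, RV (dV v) = dV (RV v)) :
    ∀ (m : ℕ) (f : (Fin m → L) → V),
      phimap Rm (fun v => RV v) m (deltamap dm (fun v => dV v) f)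
        = deltamap dm (fun v => dV v) (phimap Rm (fun v => RV v) m f)
  | 0, f => rfl
  | n + 1, f => by
    funext x
    have e1 : ∀ p : Fin (n+1),
        (fun i => Rm (update x p (dm (x p)) i))
          = update (fun i => Rm (x i)) p (dm (Rm (x p))) := by
      intro p
      funext i
      rcases eq_or_ne i p with rfl | h
      · rw [update_self, update_self, hRd]
      · rw [update_of_ne h, update_of_ne h]
    have e2 : ∀ (p i : Fin (n+1)),
        (fun j => if j = i then update x p (dm (x p)) j else Rm (update x p (dm (x p)) j))
          = update (fun j => if j = i then x j else Rm (x j)) p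
              (dm (if p = i then x p else Rm (x p))) := by
      intro p i
      funext j
      rcases eq_or_ne j p with rfl | h
      · rw [update_self, update_self]
        split_ifs
        · rfl
        · rw [hRd]
      · rw [update_of_ne h, update_of_ne h]
    simp only [phimap, deltamap, e1, e2]
    simp only [map_sub, map_add, map_sum, map_nsmul, smul_sub, smul_add, hC,
      Finset.smul_sum, Finset.sum_sub_distrib, Finset.sum_add_distrib]
    rw [Finset.sum_comm]
    abel

lemma deltamap_neg_sub (dm : L → L) (dV : V →+ V) {m : ℕ} (A B : (Fin m → L) → V) :
    deltamap dm (fun v => dV v) (-A - B)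
      = -(deltamap dm (fun v => dV v) A) - deltamap dm (fun v => dV v) B := by
  funext x
  simp only [deltamap, Pi.sub_apply, Pi.neg_apply, map_sub, map_neg,
    Finset.sum_sub_distrib, Finset.sum_neg_distrib]
  abel


/-- For a Reynolds LieDer pair `(L, R, d)` with representation `(V; ρ, R_V, d_V)`,
the operator `Δ(f,g) = (Δf, Δg)` is a cochain map for
`D_R(f, g) = (δ_CE f, -δ_R g - φ f)`: `D_R (Δ (f, g)) = Δ (D_R (f, g))` componentwise. -/
theorem delta_cochain_map
    (R : L →ₗ[k] L)
    (hR : ∀ x y : L, ⁅R x, R y⁆ = R (⁅R x, y⁆ + ⁅x, R y⁆ - ⁅R x, R y⁆))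
    (d : L →ₗ[k] L)
    (hd : ∀ x y : L, d ⁅x, y⁆ = ⁅d x, y⁆ + ⁅x, d y⁆)
    (hRd : ∀ x : L, R (d x) = d (R x))
    (ρ : L →ₗ[k] Module.End k V)
    (hρ : ∀ (x y : L) (v : V), ρ ⁅x, y⁆ v = ρ x (ρ y v) - ρ y (ρ x v))
    (RV : V →ₗ[k] V)
    (hRV : ∀ (x : L) (u : V),
      ρ (R x) (RV u) = RV (ρ (R x) u + ρ x (RV u) - ρ (R x) (RV u)))
    (dV : V →ₗ[k] V)
    (hdV : ∀ (x : L) (u : V), dV (ρ x u) = ρ (d x) u + ρ x (dV u))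
    (hRVdV : ∀ u : V, RV (dV u) = dV (RV u)) :
    ∀ (n : ℕ) (f : AlternatingMap k L V (Fin (n + 1)))
      (g : AlternatingMap k L V (Fin n)),
      (cobound (fun x v => ρ x v) (fun x y => ⁅x, y⁆) (n + 1)
          (deltamap (fun x => d x) (fun v => dV v) ⇑f)
        = deltamap (fun x => d x) (fun v => dV v)
            (cobound (fun x v => ρ x v) (fun x y => ⁅x, y⁆) (n + 1) ⇑f)) ∧
      (-(cobound (rhoR R ρ RV) (brR R) n
            (deltamap (fun x => d x) (fun v => dV v) ⇑g))
          - phimap (fun x => R x) (fun v => RV v) (n + 1)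
              (deltamap (fun x => d x) (fun v => dV v) ⇑f)
        = deltamap (fun x => d x) (fun v => dV v)
            (-(cobound (rhoR R ρ RV) (brR R) n ⇑g)
              - phimap (fun x => R x) (fun v => RV v) (n + 1) ⇑f)) := by
  intro n f g
  have hfadd : ∀ (y : Fin (n+1) → L) (q : Fin (n+1)) (a b : L),
      f (update y q (a + b)) = f (update y q a) + f (update y q b) :=
    fun y q a b => f.map_update_add y q a b
  have hgadd : ∀ (y : Fin n → L) (q : Fin n) (a b : L),
      g (update y q (a + b)) = g (update y q a) + g (update y q b) :=
    fun y q a b => g.map_update_add y q a b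
  constructor
  · exact cobound_deltamap (fun a => (ρ a).toAddMonoidHom) (fun x y => ⁅x, y⁆)
      (fun x => d x) dV.toAddMonoidHom hdV hd (n+1) ⇑f hfadd
  · have hadd : ∀ a : L, ∀ u v : V,
        rhoR R ρ RV a (u + v) = rhoR R ρ RV a u + rhoR R ρ RV a v := by
      intro a u v
      simp only [rhoR, map_add, map_sub]
      abel
    have hco : ∀ (a : L) (v : V),
        dV (rhoR R ρ RV a v) = rhoR R ρ RV (d a) v + rhoR R ρ RV a (dV v) := by
      intro a v
      simp only [rhoR, map_add, map_sub, hdV, ← hRVdV, ← hRd]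
      abel
    have hbr : ∀ a b : L, d (brR R a b) = brR R (d a) b + brR R a (d b) := by
      intro a b
      simp only [brR, map_add, map_sub, hd, ← hRd]
      abel
    have h1 : cobound (rhoR R ρ RV) (brR R) n
          (deltamap (fun x => d x) (fun v => dV v) ⇑g)
        = deltamap (fun x => d x) (fun v => dV v)
            (cobound (rhoR R ρ RV) (brR R) n ⇑g) :=
      cobound_deltamap (fun a => AddMonoidHom.mk' (rhoR R ρ RV a) (hadd a)) (brR R)
        (fun x => d x) dV.toAddMonoidHom hco hbr n ⇑g hgadd
    have h2 : phimap (fun x => R x) (fun v => RV v) (n + 1)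
          (deltamap (fun x => d x) (fun v => dV v) ⇑f)
        = deltamap (fun x => d x) (fun v => dV v)
            (phimap (fun x => R x) (fun v => RV v) (n + 1) ⇑f) :=
      phimap_deltamap (fun x => R x) RV.toAddMonoidHom (fun x => d x) dV.toAddMonoidHom
        hRd hRVdV (n + 1) ⇑f
    have h3 : deltamap (fun x => d x) (fun v => dV v)
          (-(cobound (rhoR R ρ RV) (brR R) n ⇑g)
            - phimap (fun x => R x) (fun v => RV v) (n + 1) ⇑f)
        = -(deltamap (fun x => d x) (fun v => dV v)
              (cobound (rhoR R ρ RV) (brR R) n ⇑g))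
          - deltamap (fun x => d x) (fun v => dV v)
              (phimap (fun x => R x) (fun v => RV v) (n + 1) ⇑f) :=
      deltamap_neg_sub (fun x => d x) dV.toAddMonoidHom _ _
    rw [h1, h2, h3]


end ReynoldsLieDer
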